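/- If there exist indices i ≠ j with r_i + r_j = 2·r_{ij} (i.e., d(i,j) = 0 for some pair), then lim_{σ²→0⁺} P̄_e(σ²) = g, where g = Σ_{(i,j): i≠j, d(i,j)=0} √(p_i p_j)·2^{r_{ij}/2}·( √(v_i v_j)/v_{ij} )^{1/2}, and g > 0; in particular the upper bound P̄_e exhibits an error floor at low noise. (First part of the paper's Corollary 1.) -/

import Mathlib

open Matrix Filter Topology
open scoped Classical

/-- The Bhattacharyya exponent `K_{ij}(σ²)` for zero-mean Gaussian classes with
covariances `A`, `B`, measurement matrix `Φ` and noise variance `s = σ²`. -/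
noncomputable def Kexp {M N : ℕ} (Φ : Matrix (Fin M) (Fin N) ℝ)
    (A B : Matrix (Fin N) (Fin N) ℝ) (s : ℝ) : ℝ :=
  (1 / 4) * Real.log
    ((((1 : ℝ) / 2) • (Φ * (A + B) * Φᵀ + (2 * s) • (1 : Matrix (Fin M) (Fin M) ℝ))).det ^ 2 /
      ((Φ * A * Φᵀ + s • (1 : Matrix (Fin M) (Fin M) ℝ)).det *
        (Φ * B * Φᵀ + s • (1 : Matrix (Fin M) (Fin M) ℝ)).det))

/-- The union–Bhattacharyya upper bound `P̄_e(σ²)` on the misclassification probability. -/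
noncomputable def Pbar {M N L : ℕ} (Φ : Matrix (Fin M) (Fin N) ℝ)
    (S : Fin L → Matrix (Fin N) (Fin N) ℝ) (p : Fin L → ℝ) (s : ℝ) : ℝ :=
  ∑ i, ∑ j ∈ Finset.univ.filter (fun j => j ≠ i),
    Real.sqrt (p i * p j) * Real.exp (-Kexp Φ (S i) (S j) s)

/-- The pairwise low-noise decay exponent `d(i,j) = (2 r_{ij} - r_i - r_j)/4`. -/
noncomputable def dExp {M N : ℕ} (Φ : Matrix (Fin M) (Fin N) ℝ)
    (A B : Matrix (Fin N) (Fin N) ℝ) : ℝ :=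
  (2 * ((Φ * (A + B) * Φᵀ).rank : ℝ) - (Φ * A * Φᵀ).rank - (Φ * B * Φᵀ).rank) / 4

/-- Pseudo-determinant of a symmetric matrix: product of its nonzero eigenvalues
(equal to `1` for the zero matrix). -/
noncomputable def pdet {n : ℕ} (S : Matrix (Fin n) (Fin n) ℝ) : ℝ :=
  if h : S.IsHermitian then
    ∏ k, if h.eigenvalues k = 0 then 1 else h.eigenvalues k
  else 0

variable {m : ℕ}

lemma det_add_smul_one {A : Matrix (Fin m) (Fin m) ℝ} (hA : A.IsHermitian) (s : ℝ) :
    (A + s • (1 : Matrix (Fin m) (Fin m) ℝ)).det = ∏ k, (hA.eigenvalues k + s) := by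
  set U : Matrix (Fin m) (Fin m) ℝ := (hA.eigenvectorUnitary : Matrix (Fin m) (Fin m) ℝ)
  have hU : U * star U = 1 := Matrix.mem_unitaryGroup_iff.mp hA.eigenvectorUnitary.2
  have hkey : A + s • (1 : Matrix (Fin m) (Fin m) ℝ)
      = U * (diagonal (fun k => hA.eigenvalues k + s)) * star U := by
    conv_lhs => rw [hA.spectral_theorem]
    have h1 : s • (1 : Matrix (Fin m) (Fin m) ℝ) = U * (s • 1) * star U := by
      rw [Matrix.mul_smul, Matrix.smul_mul, mul_one, hU]
    rw [Unitary.conjStarAlgAut_apply, h1, ← Matrix.add_mul, ← Matrix.mul_add]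
    congr 2
    rw [smul_one_eq_diagonal, diagonal_add]
    rfl
  rw [hkey, det_mul, det_mul, mul_comm, ← mul_assoc, ← det_mul, Matrix.mem_unitaryGroup_iff'.mp hA.eigenvectorUnitary.2, det_one, one_mul, det_diagonal]

lemma card_nonzero_eigs {A : Matrix (Fin m) (Fin m) ℝ} (hA : A.IsHermitian) :
    (Finset.univ.filter (fun k => hA.eigenvalues k ≠ 0)).card = A.rank := by
  rw [hA.rank_eq_card_non_zero_eigs, Fintype.card_subtype]

lemma card_zero_eigs {A : Matrix (Fin m) (Fin m) ℝ} (hA : A.IsHermitian) :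
    (Finset.univ.filter (fun k => hA.eigenvalues k = 0)).card = m - A.rank := by
  have h1 := Finset.card_filter_add_card_filter_not
    (s := (Finset.univ : Finset (Fin m))) (p := fun k => hA.eigenvalues k ≠ 0)
  simp only [not_not, Finset.card_univ, Fintype.card_fin] at h1
  rw [card_nonzero_eigs hA] at h1
  omega

lemma det_split {A : Matrix (Fin m) (Fin m) ℝ} (hA : A.IsHermitian) (s : ℝ) :
    (A + s • (1 : Matrix (Fin m) (Fin m) ℝ)).det
      = s ^ (m - A.rank) *
        ∏ k ∈ Finset.univ.filter (fun k => hA.eigenvalues k ≠ 0), (hA.eigenvalues k + s) := by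
  rw [det_add_smul_one hA s,
    ← Finset.prod_filter_mul_prod_filter_not Finset.univ (fun k => hA.eigenvalues k = 0)]
  congr 1
  rw [Finset.prod_congr rfl (fun k hk => by
      simp only [Finset.mem_filter] at hk; rw [hk.2, zero_add]),
    Finset.prod_const, card_zero_eigs hA]

lemma pdet_eq {A : Matrix (Fin m) (Fin m) ℝ} (hA : A.IsHermitian) :
    pdet A = ∏ k ∈ Finset.univ.filter (fun k => hA.eigenvalues k ≠ 0), hA.eigenvalues k := by
  rw [pdet, dif_pos hA, Finset.prod_filter]
  exact Finset.prod_congr rfl fun k _ => by by_cases h : hA.eigenvalues k = 0 <;> simp [h]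

lemma pdet_pos {A : Matrix (Fin m) (Fin m) ℝ} (hA : A.PosSemidef) : 0 < pdet A := by
  rw [pdet_eq hA.1]
  exact Finset.prod_pos fun k hk => by
    have := hA.eigenvalues_nonneg k
    simp only [Finset.mem_filter] at hk
    exact lt_of_le_of_ne this (Ne.symm hk.2)

lemma rank_le_rank_add {A B : Matrix (Fin m) (Fin m) ℝ}
    (hA : A.PosSemidef) (hB : B.PosSemidef) : A.rank ≤ (A + B).rank := by
  have hker : LinearMap.ker (A + B).mulVecLin ≤ LinearMap.ker A.mulVecLin := by
    intro x hx
    simp only [LinearMap.mem_ker, mulVecLin_apply] at hx ⊢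
    have hsum : star x ⬝ᵥ A *ᵥ x + star x ⬝ᵥ B *ᵥ x = 0 := by
      rw [← dotProduct_add, ← add_mulVec, hx, dotProduct_zero]
    have hAx : star x ⬝ᵥ A *ᵥ x = 0 := le_antisymm (by nlinarith [hA.dotProduct_mulVec_nonneg x, hB.dotProduct_mulVec_nonneg x]) (hA.dotProduct_mulVec_nonneg x)
    exact (hA.dotProduct_mulVec_zero_iff x).mp hAx
  have h1 := LinearMap.finrank_range_add_finrank_ker (A + B).mulVecLin
  have h2 := LinearMap.finrank_range_add_finrank_ker A.mulVecLin
  have h3 : Module.finrank ℝ (LinearMap.ker (A + B).mulVecLin)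
      ≤ Module.finrank ℝ (LinearMap.ker A.mulVecLin) := Submodule.finrank_mono hker
  simp only [Matrix.rank]
  omega

lemma alg_helper {s pa pb pc : ℝ} (hs : s ≠ 0) (hpc : pc ≠ 0) {a b c e rc : ℕ}
    (hab : a + b = e + 2 * c) :
    (s ^ a * pa) * (s ^ b * pb) / ((1 / (2:ℝ)) ^ rc * (s ^ c * pc)) ^ 2
      = s ^ e * ((2:ℝ) ^ (2 * rc) * (pa * pb) / pc ^ 2) := by
  have h1 : ((2:ℝ) ^ rc) ^ 2 = 2 ^ (2 * rc) := by rw [← pow_mul, mul_comm]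
  have h2 : s ^ a * s ^ b = s ^ e * (s ^ c) ^ 2 := by
    rw [← pow_mul, ← pow_add, ← pow_add]; congr 1; omega
  field_simp
  have h3 : ((1 / (2:ℝ)) ^ rc) ^ 2 * (2:ℝ) ^ (2 * rc) = 1 := by
    rw [← h1, ← mul_pow, ← mul_pow]; norm_num
  calc s ^ a * pa * s ^ b * pb
      = (s ^ a * s ^ b) * (pa * pb) := by ring
    _ = (s ^ e * (s ^ c) ^ 2) * (pa * pb) := by rw [h2]
    _ = pa * pb * ((1 / 2) ^ rc) ^ 2 * (s ^ c) ^ 2 * s ^ e * 2 ^ (2 * rc) := by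
      linear_combination (-(s ^ e * (s ^ c) ^ 2 * (pa * pb))) * h3


lemma value_helper {x y z : ℝ} (hx : 0 < x) (hy : 0 < y) (hz : 0 < z) (r : ℕ) :
    ((2:ℝ) ^ (2*r) * (x*y) / z ^ 2) ^ ((1:ℝ)/4)
      = (2:ℝ) ^ ((r:ℝ)/2) * Real.sqrt (Real.sqrt (x*y) / z) := by
  have h1 : ((2:ℝ) ^ (2*r)) ^ ((1:ℝ)/4) = (2:ℝ) ^ ((r:ℝ)/2) := by
    rw [← Real.rpow_natCast 2 (2*r), ← Real.rpow_mul (by norm_num)]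
    congr 1; push_cast; ring
  have h2 : ((z:ℝ) ^ 2) ^ ((1:ℝ)/4) = z ^ ((1:ℝ)/2) := by
    rw [← Real.rpow_natCast z 2, ← Real.rpow_mul hz.le]; norm_num
  have h3 : Real.sqrt (Real.sqrt (x*y) / z) = (x*y) ^ ((1:ℝ)/4) / z ^ ((1:ℝ)/2) := by
    rw [Real.sqrt_eq_rpow, Real.sqrt_eq_rpow,
      Real.div_rpow (Real.rpow_nonneg (by positivity) _) hz.le,
      ← Real.rpow_mul (by positivity)]
    norm_num
  rw [Real.div_rpow (by positivity) (by positivity),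
    Real.mul_rpow (by positivity) (by positivity), h1, h2, h3, mul_div_assoc]

lemma pair_tendsto {A B : Matrix (Fin m) (Fin m) ℝ} (hA : A.PosSemidef) (hB : B.PosSemidef) :
    Tendsto (fun s : ℝ => Real.exp (-((1/4) * Real.log
        ((((1:ℝ)/2) • (A + B + (2*s) • (1 : Matrix (Fin m) (Fin m) ℝ))).det ^ 2 /
          ((A + s • (1 : Matrix (Fin m) (Fin m) ℝ)).det *
            (B + s • (1 : Matrix (Fin m) (Fin m) ℝ)).det)))))
      (𝓝[>] (0:ℝ))
      (𝓝 (if A.rank + B.rank = 2 * (A + B).rank then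
            (2:ℝ) ^ (((A + B).rank : ℝ)/2) *
              Real.sqrt (Real.sqrt (pdet A * pdet B) / pdet (A + B))
          else 0)) := by
  have hC : (A + B).PosSemidef := hA.add hB
  have hrA : A.rank ≤ (A + B).rank := rank_le_rank_add hA hB
  have hrB : B.rank ≤ (A + B).rank := by
    have := rank_le_rank_add hB hA; rwa [add_comm B A] at this
  have hrCm : (A + B).rank ≤ m := (A + B).rank_le_width
  set PA : ℝ → ℝ := fun s =>
    ∏ k ∈ Finset.univ.filter (fun k => hA.1.eigenvalues k ≠ 0), (hA.1.eigenvalues k + s) with hPA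
  set PB : ℝ → ℝ := fun s =>
    ∏ k ∈ Finset.univ.filter (fun k => hB.1.eigenvalues k ≠ 0), (hB.1.eigenvalues k + s) with hPB
  set PC : ℝ → ℝ := fun s =>
    ∏ k ∈ Finset.univ.filter (fun k => hC.1.eigenvalues k ≠ 0), (hC.1.eigenvalues k + s) with hPC
  have hPApos : ∀ s : ℝ, 0 ≤ s → 0 < PA s := fun s hs => Finset.prod_pos fun k hk => by
    have := hA.eigenvalues_nonneg k
    simp only [Finset.mem_filter] at hk
    have : 0 < hA.1.eigenvalues k := lt_of_le_of_ne this (Ne.symm hk.2)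
    linarith
  have hPBpos : ∀ s : ℝ, 0 ≤ s → 0 < PB s := fun s hs => Finset.prod_pos fun k hk => by
    have := hB.eigenvalues_nonneg k
    simp only [Finset.mem_filter] at hk
    have : 0 < hB.1.eigenvalues k := lt_of_le_of_ne this (Ne.symm hk.2)
    linarith
  have hPCpos : ∀ s : ℝ, 0 ≤ s → 0 < PC s := fun s hs => Finset.prod_pos fun k hk => by
    have := hC.eigenvalues_nonneg k
    simp only [Finset.mem_filter] at hk
    have : 0 < hC.1.eigenvalues k := lt_of_le_of_ne this (Ne.symm hk.2)
    linarith
  set e : ℕ := 2 * (A + B).rank - A.rank - B.rank with he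
  set H : ℝ → ℝ := fun s => (2:ℝ) ^ (2 * (A + B).rank) * (PA s * PB s) / (PC (2*s)) ^ 2 with hH
  -- eventual equality
  have hev : ∀ s ∈ Set.Ioi (0:ℝ),
      Real.exp (-((1/4) * Real.log
        ((((1:ℝ)/2) • (A + B + (2*s) • (1 : Matrix (Fin m) (Fin m) ℝ))).det ^ 2 /
          ((A + s • (1 : Matrix (Fin m) (Fin m) ℝ)).det *
            (B + s • (1 : Matrix (Fin m) (Fin m) ℝ)).det))))
      = s ^ ((e:ℝ)/4) * (H s) ^ ((1:ℝ)/4) := by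
    intro s hs
    have hs0 : (0:ℝ) < s := hs
    have hDdet : (((1:ℝ)/2) • (A + B + (2*s) • (1 : Matrix (Fin m) (Fin m) ℝ))).det
        = ((1:ℝ)/2) ^ ((A+B).rank) * (s ^ (m - (A+B).rank) * PC (2*s)) := by
      rw [Matrix.det_smul, Fintype.card_fin, det_split hC.1 (2*s)]
      have hconst : ((1:ℝ)/2) ^ m * (2*s) ^ (m - (A+B).rank)
          = ((1:ℝ)/2) ^ ((A+B).rank) * s ^ (m - (A+B).rank) := by
        have hsplit : ((1:ℝ)/2) ^ m
            = ((1:ℝ)/2) ^ ((A+B).rank) * ((1:ℝ)/2) ^ (m - (A+B).rank) := by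
          rw [← pow_add]; congr 1; omega
        have hone : ((1:ℝ)/2) ^ (m - (A+B).rank) * (2:ℝ) ^ (m - (A+B).rank) = 1 := by
          rw [← mul_pow]; norm_num
        rw [mul_pow, hsplit]
        calc ((1:ℝ)/2) ^ ((A+B).rank) * ((1:ℝ)/2) ^ (m - (A+B).rank)
              * ((2:ℝ) ^ (m - (A+B).rank) * s ^ (m - (A+B).rank))
            = ((1:ℝ)/2) ^ ((A+B).rank)
              * (((1:ℝ)/2) ^ (m - (A+B).rank) * (2:ℝ) ^ (m - (A+B).rank))
              * s ^ (m - (A+B).rank) := by ring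
          _ = _ := by rw [hone, mul_one]
      rw [← mul_assoc, hconst, mul_assoc]
    have hQ : (((A + s • (1 : Matrix (Fin m) (Fin m) ℝ)).det *
            (B + s • (1 : Matrix (Fin m) (Fin m) ℝ)).det)) /
        ((((1:ℝ)/2) • (A + B + (2*s) • (1 : Matrix (Fin m) (Fin m) ℝ))).det ^ 2)
        = s ^ e * H s := by
      rw [hDdet, det_split hA.1 s, det_split hB.1 s]
      exact alg_helper hs0.ne' (hPCpos (2*s) (by linarith)).ne' (by omega)
    have hHs : (0:ℝ) < H s :=
      div_pos (mul_pos (pow_pos two_pos _) (mul_pos (hPApos s hs0.le) (hPBpos s hs0.le)))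
        (pow_pos (hPCpos (2*s) (by linarith)) 2)
    have hQpos : (0:ℝ) < s ^ e * H s := mul_pos (pow_pos hs0 e) hHs
    have hNpos : (0:ℝ) < (A + s • (1 : Matrix (Fin m) (Fin m) ℝ)).det *
        (B + s • (1 : Matrix (Fin m) (Fin m) ℝ)).det := by
      rw [det_split hA.1 s, det_split hB.1 s]
      exact mul_pos (mul_pos (pow_pos hs0 _) (hPApos s hs0.le))
        (mul_pos (pow_pos hs0 _) (hPBpos s hs0.le))
    have hDpos : (0:ℝ) < (((1:ℝ)/2) • (A + B + (2*s) • (1 : Matrix (Fin m) (Fin m) ℝ))).det := by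
      rw [hDdet]
      exact mul_pos (by positivity) (mul_pos (pow_pos hs0 _) (hPCpos (2*s) (by linarith)))
    have hlog : -((1/4) * Real.log
        ((((1:ℝ)/2) • (A + B + (2*s) • (1 : Matrix (Fin m) (Fin m) ℝ))).det ^ 2 /
          ((A + s • (1 : Matrix (Fin m) (Fin m) ℝ)).det *
            (B + s • (1 : Matrix (Fin m) (Fin m) ℝ)).det)))
        = Real.log (s ^ e * H s) * (1/4) := by
      rw [← hQ, Real.log_div hNpos.ne' (pow_ne_zero 2 hDpos.ne'),
        Real.log_div (pow_ne_zero 2 hDpos.ne') hNpos.ne']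
      ring
    rw [hlog, ← Real.rpow_def_of_pos hQpos, ← hQ]
    rw [hQ, Real.mul_rpow (pow_nonneg hs0.le e) hHs.le]
    congr 1
    rw [← Real.rpow_natCast s e, ← Real.rpow_mul hs0.le]
    ring_nf
  -- limits
  have hPA0 : PA 0 = pdet A := by rw [pdet_eq hA.1, hPA]; simp
  have hPB0 : PB 0 = pdet B := by rw [pdet_eq hB.1, hPB]; simp
  have hPC0 : PC 0 = pdet (A + B) := by rw [pdet_eq hC.1, hPC]; simp
  have contPA : Continuous PA := by
    rw [hPA]; exact continuous_finset_prod _ fun k _ => continuous_const.add continuous_id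
  have contPB : Continuous PB := by
    rw [hPB]; exact continuous_finset_prod _ fun k _ => continuous_const.add continuous_id
  have contPC : Continuous PC := by
    rw [hPC]; exact continuous_finset_prod _ fun k _ => continuous_const.add continuous_id
  have hHcont : Tendsto H (𝓝[>] (0:ℝ)) (𝓝 (H 0)) := by
    have hcA : ContinuousAt H 0 := by
      apply ContinuousAt.div
      · exact (continuous_const.mul (contPA.mul contPB)).continuousAt
      · exact ((contPC.comp (continuous_const.mul continuous_id)).pow 2).continuousAt
      · have : PC (2 * 0) = pdet (A + B) := by rw [mul_zero, hPC0]
        rw [this]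
        exact pow_ne_zero 2 (pdet_pos hC).ne'
    exact hcA.tendsto.mono_left nhdsWithin_le_nhds
  have hH4 : Tendsto (fun s => (H s) ^ ((1:ℝ)/4)) (𝓝[>] (0:ℝ)) (𝓝 ((H 0) ^ ((1:ℝ)/4))) :=
    hHcont.rpow_const (Or.inr (by norm_num))
  have hpowlim : Tendsto (fun s : ℝ => s ^ ((e:ℝ)/4)) (𝓝[>] (0:ℝ))
      (𝓝 (if e = 0 then 1 else 0)) := by
    by_cases he0 : e = 0
    · rw [if_pos he0, he0]
      have : ∀ s : ℝ, s ^ (((0:ℕ):ℝ)/4) = 1 := fun s => by norm_num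
      simpa only [this] using tendsto_const_nhds
    · rw [if_neg he0]
      have hpos : (0:ℝ) < (e:ℝ)/4 := by
        have : 0 < e := Nat.pos_of_ne_zero he0
        positivity
      have hc := (Real.continuousAt_rpow_const 0 ((e:ℝ)/4) (Or.inr hpos.le)).tendsto
      rw [Real.zero_rpow hpos.ne'] at hc
      exact hc.mono_left nhdsWithin_le_nhds
  have htot := hpowlim.mul hH4
  have hval : (if e = 0 then (1:ℝ) else 0) * (H 0) ^ ((1:ℝ)/4)
      = (if A.rank + B.rank = 2 * (A + B).rank then
          (2:ℝ) ^ (((A + B).rank : ℝ)/2) *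
            Real.sqrt (Real.sqrt (pdet A * pdet B) / pdet (A + B))
        else 0) := by
    have hH0 : H 0 = (2:ℝ) ^ (2 * (A + B).rank) * (pdet A * pdet B) / (pdet (A + B)) ^ 2 := by
      rw [hH]; simp only [mul_zero, hPC0]; rw [hPA0, hPB0]
    by_cases hcond : A.rank + B.rank = 2 * (A + B).rank
    · have he0 : e = 0 := by omega
      rw [if_pos he0, if_pos hcond, one_mul, hH0,
        value_helper (pdet_pos hA) (pdet_pos hB) (pdet_pos hC)]
    · have he0 : e ≠ 0 := by omega
      rw [if_neg he0, if_neg hcond, zero_mul]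
  rw [hval] at htot
  exact Filter.Tendsto.congr' (Filter.eventuallyEq_of_mem self_mem_nhdsWithin hev).symm htot

/-- first part of the paper's Corollary 1. If some pair `i ≠ j` has
`r_i + r_j = 2 r_{ij}` (i.e. `d(i,j) = 0`), then `P̄_e(σ²) → g > 0` as `σ² → 0⁺`,
where `g` sums over all pairs with `d(i,j) = 0`: an error floor at low noise. -/
theorem stmt1 {N M L : ℕ} (hN : 1 ≤ N) (hM : 1 ≤ M) (hL : 2 ≤ L)
    (Φ : Matrix (Fin M) (Fin N) ℝ) (S : Fin L → Matrix (Fin N) (Fin N) ℝ)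
    (hS : ∀ i, (S i).PosSemidef)
    (p : Fin L → ℝ) (hp : ∀ i, 0 < p i) (hpsum : ∑ i, p i = 1)
    (hfloor : ∃ i j, i ≠ j ∧
      (Φ * S i * Φᵀ).rank + (Φ * S j * Φᵀ).rank = 2 * (Φ * (S i + S j) * Φᵀ).rank)
    (g : ℝ)
    (hg : g = ∑ i, ∑ j ∈ Finset.univ.filter (fun j => j ≠ i ∧ dExp Φ (S i) (S j) = 0),
      Real.sqrt (p i * p j) * (2 : ℝ) ^ (((Φ * (S i + S j) * Φᵀ).rank : ℝ) / 2) *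
        Real.sqrt (Real.sqrt (pdet (Φ * S i * Φᵀ) * pdet (Φ * S j * Φᵀ)) /
          pdet (Φ * (S i + S j) * Φᵀ))) :
    Tendsto (fun s : ℝ => Pbar Φ S p s) (𝓝[>] (0 : ℝ)) (𝓝 g) ∧ 0 < g := by
  have hdist : ∀ i j, Φ * (S i + S j) * Φᵀ = Φ * S i * Φᵀ + Φ * S j * Φᵀ := fun i j => by
    rw [Matrix.mul_add, Matrix.add_mul]
  have hPSD : ∀ i, (Φ * S i * Φᵀ).PosSemidef := fun i => by
    have h := (hS i).mul_mul_conjTranspose_same Φ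
    rwa [conjTranspose_eq_transpose_of_trivial] at h
  have hcond : ∀ i j, dExp Φ (S i) (S j) = 0 ↔
      (Φ * S i * Φᵀ).rank + (Φ * S j * Φᵀ).rank
        = 2 * ((Φ * S i * Φᵀ) + (Φ * S j * Φᵀ)).rank := by
    intro i j
    rw [dExp, hdist i j, div_eq_zero_iff]
    constructor
    · rintro (h | h)
      · have h' : ((Φ * S i * Φᵀ).rank : ℝ) + ((Φ * S j * Φᵀ).rank : ℝ)
            = 2 * (((Φ * S i * Φᵀ) + (Φ * S j * Φᵀ)).rank : ℝ) := by linarith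
        exact_mod_cast h'
      · norm_num at h
    · intro h
      left
      have h' : ((Φ * S i * Φᵀ).rank : ℝ) + ((Φ * S j * Φᵀ).rank : ℝ)
          = 2 * (((Φ * S i * Φᵀ) + (Φ * S j * Φᵀ)).rank : ℝ) := by exact_mod_cast h
      linarith
  set T : Fin L → Fin L → ℝ := fun i j =>
    if (Φ * S i * Φᵀ).rank + (Φ * S j * Φᵀ).rank
        = 2 * ((Φ * S i * Φᵀ) + (Φ * S j * Φᵀ)).rank then
      (2:ℝ) ^ ((((Φ * S i * Φᵀ) + (Φ * S j * Φᵀ)).rank : ℝ)/2) *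
        Real.sqrt (Real.sqrt (pdet (Φ * S i * Φᵀ) * pdet (Φ * S j * Φᵀ)) /
          pdet ((Φ * S i * Φᵀ) + (Φ * S j * Φᵀ)))
    else 0 with hT
  have hpair : ∀ i j, Tendsto (fun s => Real.exp (-Kexp Φ (S i) (S j) s)) (𝓝[>] (0:ℝ))
      (𝓝 (T i j)) := by
    intro i j
    have h := pair_tendsto (hPSD i) (hPSD j)
    simp only [Kexp, hdist i j, hT]
    exact h
  have hgsum : g = ∑ i, ∑ j ∈ Finset.univ.filter (fun j => j ≠ i),
      Real.sqrt (p i * p j) * T i j := by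
    rw [hg]
    refine Finset.sum_congr rfl fun i _ => ?_
    rw [Finset.sum_filter, Finset.sum_filter]
    refine Finset.sum_congr rfl fun j _ => ?_
    by_cases hji : j ≠ i
    · by_cases hd : dExp Φ (S i) (S j) = 0
      · rw [if_pos ⟨hji, hd⟩, if_pos hji, hT]
        simp only
        rw [if_pos ((hcond i j).mp hd), hdist i j]
        ring
      · rw [if_neg (by tauto), if_pos hji, hT]
        simp only
        rw [if_neg (fun hc => hd ((hcond i j).mpr hc)), mul_zero]
    · rw [if_neg (by tauto), if_neg hji]
  refine ⟨?_, ?_⟩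
  · rw [hgsum]
    have : Tendsto (fun s : ℝ => Pbar Φ S p s) (𝓝[>] (0:ℝ))
        (𝓝 (∑ i, ∑ j ∈ Finset.univ.filter (fun j => j ≠ i),
          Real.sqrt (p i * p j) * T i j)) := by
      simp only [Pbar]
      refine tendsto_finset_sum _ fun i _ => ?_
      refine tendsto_finset_sum _ fun j _ => ?_
      exact (hpair i j).const_mul _
    exact this
  · obtain ⟨i0, j0, hne, heq⟩ := hfloor
    rw [hdist i0 j0] at heq
    have hTnn : ∀ i j, 0 ≤ T i j := by
      intro i j
      rw [hT]
      simp only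
      split
      · positivity
      · exact le_rfl
    rw [hgsum]
    refine Finset.sum_pos' (fun i _ => Finset.sum_nonneg fun j _ =>
      mul_nonneg (Real.sqrt_nonneg _) (hTnn i j)) ⟨i0, Finset.mem_univ _, ?_⟩
    refine Finset.sum_pos' (fun j _ => mul_nonneg (Real.sqrt_nonneg _) (hTnn i0 j))
      ⟨j0, Finset.mem_filter.mpr ⟨Finset.mem_univ _, hne.symm⟩, ?_⟩
    apply mul_pos
    · exact Real.sqrt_pos.mpr (mul_pos (hp i0) (hp j0))
    · rw [hT]
      simp only
      rw [if_pos heq]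
      apply mul_pos (Real.rpow_pos_of_pos two_pos _)
      apply Real.sqrt_pos.mpr
      apply div_pos
      · exact Real.sqrt_pos.mpr (mul_pos (pdet_pos (hPSD i0)) (pdet_pos (hPSD j0)))
      · exact pdet_pos ((hPSD i0).add (hPSD j0))
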